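/- arXiv:0812.0739 — 2 statements merged into one kernel-verified Lean document; each statement's English description precedes it below -/
import Mathlib

section
/- For every complex number z, the limit as α → ∞ of the normalized spherical Bessel function j_α(√α · z) equals e^{-z²/4}. -/
/-!
Since `Γ(n + α + 1) = Γ(α + 1) (α + 1) ⋯ (α + n)`, the `n`-th term of the series of `j_α(√α z)`
is the `n`-th term `(-z²/4)ⁿ / n!` of the exponential series times the weight
`αⁿ / ((α + 1) ⋯ (α + n))`. For `α ≥ 0` the weights lie in `[0, 1]`, and each tends to `1` as
`α → ∞`, so dominated convergence against the series of `exp (‖z‖² / 4)` gives the limit.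
-/

/-- The normalized spherical Bessel function
`j_α(z) = Γ(α+1) · Σ_{n≥0} (-1)^n (z/2)^{2n} / (n! Γ(n+α+1))`. -/
noncomputable def jBessel (α : ℝ) (z : ℂ) : ℂ :=
  Complex.Gamma (α + 1) *
    ∑' n : ℕ, ((-1) ^ n * (z / 2) ^ (2 * n)) / ((n.factorial : ℂ) * Complex.Gamma (n + α + 1))

open Filter Finset Topology

theorem ascPochhammer_eval_eq_prod_range {S : Type*} [CommSemiring S] (n : ℕ) (s : S) :
    (ascPochhammer S n).eval s = ∏ k ∈ range n, (s + k) := by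
  induction n with
  | zero => simp
  | succ n ih => simp [ascPochhammer_succ_right, prod_range_succ, ih]

theorem Complex.Gamma_add_nat_eq_mul_prod (z : ℂ) (hz : ∀ k : ℕ, z ≠ -k) (n : ℕ) :
    Gamma (z + n) = Gamma z * ∏ k ∈ range n, (z + k) := by
  rw [← ascPochhammer_eval_eq_prod_range, ← Gamma_add_nat_div_Gamma_eq z hz,
    mul_div_cancel₀ _ (Gamma_ne_zero hz)]

theorem tendsto_div_add_const_atTop (c : ℝ) :
    Tendsto (fun x : ℝ => x / (x + c)) atTop (𝓝 1) := by
  have h : Tendsto (fun x : ℝ => (1 + c * x⁻¹)⁻¹) atTop (𝓝 (1 + c * 0)⁻¹) :=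
    ((tendsto_inv_atTop_zero.const_mul c).const_add 1).inv₀ (by simp)
  rw [mul_zero, add_zero, inv_one] at h
  refine h.congr' ?_
  filter_upwards [eventually_gt_atTop 0] with x hx
  field_simp

theorem tendsto_tsum_pow_div_factorial_mul {ι : Type*} {l : Filter ι} {w : ι → ℕ → ℂ}
    (x : ℂ) (hw : ∀ n, Tendsto (w · n) l (𝓝 1)) (hbound : ∀ᶠ i in l, ∀ n, ‖w i n‖ ≤ 1) :
    Tendsto (fun i => ∑' n, x ^ n / n.factorial * w i n) l (𝓝 (Complex.exp x)) := by
  have hlim : ∀ n, Tendsto (fun i => x ^ n / n.factorial * w i n) l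
      (𝓝 (x ^ n / n.factorial)) := fun n => by
    simpa using (hw n).const_mul (x ^ n / n.factorial)
  have hdom : ∀ᶠ i in l, ∀ n, ‖x ^ n / n.factorial * w i n‖ ≤ ‖x‖ ^ n / n.factorial := by
    filter_upwards [hbound] with i hi n
    rw [norm_mul, norm_div, norm_pow, Complex.norm_natCast]
    exact mul_le_of_le_one_right (by positivity) (hi n)
  rw [Complex.exp_eq_exp_ℂ, NormedSpace.exp_eq_tsum_div]
  exact tendsto_tsum_of_dominated_convergence (Real.summable_pow_div_factorial ‖x‖) hlim hdom

noncomputable def jBesselWeight (α : ℝ) (n : ℕ) : ℝ :=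
  ∏ k ∈ range n, α / (α + 1 + k)

theorem jBesselWeight_nonneg {α : ℝ} (hα : 0 ≤ α) (n : ℕ) : 0 ≤ jBesselWeight α n :=
  prod_nonneg fun k _ => div_nonneg hα (by positivity)

theorem jBesselWeight_le_one {α : ℝ} (hα : 0 ≤ α) (n : ℕ) : jBesselWeight α n ≤ 1 :=
  prod_le_one (fun k _ => div_nonneg hα (by positivity))
    fun k _ => div_le_one_of_le₀ (by linarith [k.cast_nonneg (α := ℝ)]) (by positivity)

theorem tendsto_jBesselWeight_atTop (n : ℕ) :
    Tendsto (jBesselWeight · n) atTop (𝓝 1) := by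
  simpa only [jBesselWeight, add_assoc, prod_const_one] using
    tendsto_finsetProd (range n) fun k _ => tendsto_div_add_const_atTop (1 + k)

theorem jBessel_sqrt_mul {α : ℝ} (hα : 0 ≤ α) (z : ℂ) :
    jBessel α (Real.sqrt α * z) =
      ∑' n : ℕ, (-z ^ 2 / 4) ^ n / n.factorial * (jBesselWeight α n : ℂ) := by
  have hz : ∀ k : ℕ, (α + 1 : ℂ) ≠ -k := fun k h => by
    have := congrArg Complex.re h
    simp only [Complex.add_re, Complex.ofReal_re, Complex.one_re, Complex.neg_re,
      Complex.natCast_re] at this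
    linarith [k.cast_nonneg (α := ℝ)]
  rw [jBessel, ← tsum_mul_left]
  refine tsum_congr fun n => ?_
  have hΓ : Complex.Gamma (n + α + 1) =
      Complex.Gamma (α + 1) * ∏ k ∈ range n, ((α : ℂ) + 1 + k) := by
    rw [← Complex.Gamma_add_nat_eq_mul_prod _ hz]
    ring_nf
  have hweight : (jBesselWeight α n : ℂ) = α ^ n / ∏ k ∈ range n, ((α : ℂ) + 1 + k) := by
    simp [jBesselWeight, prod_div_distrib]
  have hpow : ((Real.sqrt α : ℂ) * z / 2) ^ (2 * n) = α ^ n * (z ^ 2 / 4) ^ n := by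
    rw [pow_mul, ← mul_pow, div_pow, mul_pow, ← Complex.ofReal_pow, Real.sq_sqrt hα]
    ring
  have hP : ∏ k ∈ range n, ((α : ℂ) + 1 + k) ≠ 0 :=
    prod_ne_zero_iff.mpr fun k _ => add_eq_zero_iff_eq_neg.not.mpr (hz k)
  rw [hΓ, hweight, hpow, neg_div, neg_pow (z ^ 2 / 4)]
  field_simp [Complex.Gamma_ne_zero hz]

/-- For every `z ∈ ℂ`, `j_α(√α · z) → e^{-z²/4}` as `α → ∞`. -/
theorem limit_jBessel (z : ℂ) :
    Filter.Tendsto (fun α : ℝ => jBessel α ((Real.sqrt α : ℂ) * z)) Filter.atTop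
      (nhds (Complex.exp (-z ^ 2 / 4))) := by
  have hweight (n : ℕ) : Tendsto (fun α : ℝ => (jBesselWeight α n : ℂ)) atTop (𝓝 1) :=
    Complex.ofReal_one ▸ (tendsto_jBesselWeight_atTop n).ofReal
  have hbound : ∀ᶠ α : ℝ in atTop, ∀ n, ‖(jBesselWeight α n : ℂ)‖ ≤ 1 := by
    filter_upwards [eventually_ge_atTop 0] with α hα n
    rw [Complex.norm_real, Real.norm_of_nonneg (jBesselWeight_nonneg hα n)]
    exact jBesselWeight_le_one hα n
  refine (tendsto_tsum_pow_div_factorial_mul (-z ^ 2 / 4) hweight hbound).congr' ?_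
  filter_upwards [eventually_ge_atTop 0] with α hα
  exact (jBessel_sqrt_mul hα z).symm
end

section
/- Let N ≥ 1, k₂ ≥ 0, k₁ ≥ k₂(N−1), and set μ = k₁ + k₂(N−1) + 1/2. Then for every partition λ = (λ₁ ≥ ⋯ ≥ λ_N) of nonnegative integers, the generalized Pochhammer symbol (μ)_λ = ∏_{j=1}^N (μ − k₂(j−1))_{λ_j} satisfies (μ)_λ ≥ 2^{−N(N−1)(k₂+1)/2} · μ^{|λ|}, where |λ| = λ₁ + ⋯ + λ_N and (x)_m = x(x+1)⋯(x+m−1) is the ordinary Pochhammer symbol. -/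
lemma sum_range_cast_real (n : ℕ) : ∑ i ∈ Finset.range n, (i : ℝ) = n * (n - 1) / 2 := by
  induction n with
  | zero => simp
  | succ m ih => rw [Finset.sum_range_succ, ih]; push_cast; ring

/-- Lower bound for the generalized Pochhammer symbol
`(μ)_λ = ∏_{j=1}^N (μ − k₂(j−1))_{λ_j} ≥ 2^{−N(N−1)(k₂+1)/2} μ^{|λ|}`. -/
theorem pochhammer_lower_bound (N : ℕ) (hN : 1 ≤ N) (k₁ k₂ : ℝ) (hk₂ : 0 ≤ k₂)
    (hk₁ : k₂ * ((N : ℝ) - 1) ≤ k₁) (μ : ℝ) (hμ : μ = k₁ + k₂ * ((N : ℝ) - 1) + 1 / 2)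
    (lam : Fin N → ℕ) (hlam : Antitone lam) :
    (2 : ℝ) ^ (-((N : ℝ) * ((N : ℝ) - 1) * (k₂ + 1) / 2)) * μ ^ (∑ j, lam j) ≤
      ∏ j, ∏ i ∈ Finset.range (lam j), (μ - k₂ * ((j : ℕ) : ℝ) + (i : ℝ)) := by
  have hN1 : (1 : ℝ) ≤ (N : ℝ) := by exact_mod_cast hN
  have hk2N : 0 ≤ k₂ * ((N : ℝ) - 1) := mul_nonneg hk₂ (by linarith)
  have hμpos : 0 < μ := by rw [hμ]; linarith
  set count : Fin N → ℕ := fun j =>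
    ((Finset.range (lam j)).filter (fun i : ℕ => ((i : ℝ) < k₂ * ((j : ℕ) : ℝ)))).card with hcountdef
  -- per-j bound
  have step1 : ∀ j : Fin N,
      μ ^ (lam j) * (1 / 2 : ℝ) ^ (count j) ≤
        ∏ i ∈ Finset.range (lam j), (μ - k₂ * ((j : ℕ) : ℝ) + (i : ℝ)) := by
    intro j
    have hj : ((j : ℕ) : ℝ) ≤ (N : ℝ) - 1 := by
      have h := j.isLt
      have : ((j : ℕ) : ℝ) + 1 ≤ (N : ℝ) := by exact_mod_cast Nat.succ_le_of_lt h
      linarith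
    have hkj : k₂ * ((j : ℕ) : ℝ) ≤ k₂ * ((N : ℝ) - 1) := mul_le_mul_of_nonneg_left hj hk₂
    have key : ∏ i ∈ Finset.range (lam j),
        (μ * (1 / 2 : ℝ) ^ (if (i : ℝ) < k₂ * ((j : ℕ) : ℝ) then 1 else 0)) ≤
        ∏ i ∈ Finset.range (lam j), (μ - k₂ * ((j : ℕ) : ℝ) + (i : ℝ)) := by
      apply Finset.prod_le_prod
      · intro i _
        positivity
      · intro i _
        by_cases hbad : (i : ℝ) < k₂ * ((j : ℕ) : ℝ)
        · simp only [hbad, if_true, pow_one]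
          have hi : (0 : ℝ) ≤ (i : ℝ) := Nat.cast_nonneg i
          rw [hμ]
          nlinarith
        · simp only [hbad, if_false, pow_zero, mul_one]
          have : k₂ * ((j : ℕ) : ℝ) ≤ (i : ℝ) := le_of_not_gt hbad
          linarith
    calc μ ^ (lam j) * (1 / 2 : ℝ) ^ (count j)
        = ∏ i ∈ Finset.range (lam j),
            (μ * (1 / 2 : ℝ) ^ (if (i : ℝ) < k₂ * ((j : ℕ) : ℝ) then 1 else 0)) := by
          rw [Finset.prod_mul_distrib, Finset.prod_const, Finset.prod_pow_eq_pow_sum,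
            Finset.card_range]
          congr 1
          rw [hcountdef]
          simp [Finset.sum_boole]
      _ ≤ _ := key
  -- bound on the number of "bad" factors
  have hcount_le : ∀ j : Fin N, ((count j : ℕ) : ℝ) ≤ (k₂ + 1) * ((j : ℕ) : ℝ) := by
    intro j
    rcases Nat.eq_zero_or_pos (j : ℕ) with h0 | hpos
    · have hz : count j = 0 := by
        rw [hcountdef]
        simp only [h0, Nat.cast_zero, mul_zero, Finset.card_eq_zero,
          Finset.filter_eq_empty_iff]
        intro i _
        exact not_lt.mpr (Nat.cast_nonneg i)
      simp [hz, h0]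
    · have hj1 : (1 : ℝ) ≤ ((j : ℕ) : ℝ) := by exact_mod_cast hpos
      have hsub : count j ≤ ⌈k₂ * ((j : ℕ) : ℝ)⌉₊ := by
        rw [hcountdef]
        calc ((Finset.range (lam j)).filter
              (fun i : ℕ => ((i : ℝ) < k₂ * ((j : ℕ) : ℝ)))).card
            ≤ (Finset.range ⌈k₂ * ((j : ℕ) : ℝ)⌉₊).card := by
              apply Finset.card_le_card
              intro i hi
              rw [Finset.mem_filter] at hi
              exact Finset.mem_range.mpr (Nat.lt_ceil.mpr hi.2)
          _ = ⌈k₂ * ((j : ℕ) : ℝ)⌉₊ := Finset.card_range _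
      have hceil : (⌈k₂ * ((j : ℕ) : ℝ)⌉₊ : ℝ) < k₂ * ((j : ℕ) : ℝ) + 1 :=
        Nat.ceil_lt_add_one (mul_nonneg hk₂ (by linarith))
      have : ((count j : ℕ) : ℝ) ≤ (⌈k₂ * ((j : ℕ) : ℝ)⌉₊ : ℝ) := by exact_mod_cast hsub
      nlinarith
  set B : ℕ := ∑ j, count j with hBdef
  set E : ℝ := (N : ℝ) * ((N : ℝ) - 1) * (k₂ + 1) / 2 with hEdef
  have hBE : ((B : ℕ) : ℝ) ≤ E := by
    have h1 : ((B : ℕ) : ℝ) ≤ ∑ j : Fin N, (k₂ + 1) * ((j : ℕ) : ℝ) := by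
      rw [hBdef]
      push_cast
      exact Finset.sum_le_sum fun j _ => hcount_le j
    have h2 : ∑ j : Fin N, (k₂ + 1) * ((j : ℕ) : ℝ) = E := by
      rw [← Finset.mul_sum, Fin.sum_univ_eq_sum_range (fun i => ((i : ℕ) : ℝ)) N,
        sum_range_cast_real, hEdef]
      ring
    linarith [h1, h2.le, h2.ge]
  have hμS : (0 : ℝ) ≤ μ ^ (∑ j, lam j) := le_of_lt (pow_pos hμpos _)
  calc (2 : ℝ) ^ (-E) * μ ^ (∑ j, lam j)
      ≤ (1 / 2 : ℝ) ^ B * μ ^ (∑ j, lam j) := by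
        apply mul_le_mul_of_nonneg_right _ hμS
        have : (2 : ℝ) ^ (-E) ≤ (2 : ℝ) ^ (-((B : ℕ) : ℝ)) :=
          Real.rpow_le_rpow_of_exponent_le one_le_two (neg_le_neg hBE)
        calc (2 : ℝ) ^ (-E) ≤ (2 : ℝ) ^ (-((B : ℕ) : ℝ)) := this
          _ = (1 / 2 : ℝ) ^ B := by
              rw [Real.rpow_neg (by norm_num), Real.rpow_natCast, one_div, inv_pow]
    _ = ∏ j, (μ ^ (lam j) * (1 / 2 : ℝ) ^ (count j)) := by
        rw [Finset.prod_mul_distrib, Finset.prod_pow_eq_pow_sum,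
          Finset.prod_pow_eq_pow_sum, hBdef]
        ring
    _ ≤ ∏ j, ∏ i ∈ Finset.range (lam j), (μ - k₂ * ((j : ℕ) : ℝ) + (i : ℝ)) := by
        apply Finset.prod_le_prod
        · intro j _
          positivity
        · intro j _
          exact step1 j
end
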